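/- arXiv:1105.1196 — 2 statements merged into one kernel-verified Lean document; each statement's English description precedes it below -/
import Mathlib

section
/- Let p₂(x) = (1/4)·exp(−2|x|). For every Schwartz function u : ℝ → ℝ, setting m = u − u'' and w = p₂ * u, one has 2 ∫_ℝ w(x) m(x) u'(x) dx = −∫_ℝ w'(x) u(x)² dx + ∫_ℝ w'(x) (u'(x))² dx. -/
/-!
Since `2 (u - u'') u' = (u²)' - ((u')²)'`, the identity is two integrations by parts against `w`.
They are legitimate because `w = p₂ * u` and `w' = p₂ * u'` are bounded (`p₂` is integrable and
`u`, `u'` are bounded), while `u²`, `(u')²` and their derivatives are integrable.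
-/

open MeasureTheory Real Set

lemma integrable_exp_neg_mul_abs {c : ℝ} (hc : 0 < c) :
    Integrable fun x : ℝ => exp (-c * |x|) := by
  rw [← integrableOn_univ, ← Iic_union_Ioi (a := 0), integrableOn_union]
  constructor
  · refine (integrableOn_exp_mul_Iic hc 0).congr_fun (fun x hx => ?_) measurableSet_Iic
    rw [abs_of_nonpos hx, neg_mul_neg]
  · refine (integrableOn_exp_mul_Ioi (neg_neg_of_pos hc) 0).congr_fun (fun x hx => ?_)
      measurableSet_Ioi
    rw [abs_of_pos hx]

section Convolution

variable {f f' g : ℝ → ℝ} {C C' : ℝ}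

lemma integrable_comp_sub_mul (hf : Continuous f) (hfC : ∀ x, ‖f x‖ ≤ C) (hg : Integrable g)
    (x : ℝ) : Integrable fun y => f (x - y) * g y :=
  hg.bdd_mul (hf.comp (continuous_const.sub continuous_id)).aestronglyMeasurable
    (ae_of_all _ fun _ => hfC _)

lemma norm_integral_comp_sub_mul_le (hfC : ∀ x, ‖f x‖ ≤ C) (hg : Integrable g) (x : ℝ) :
    ‖∫ y, f (x - y) * g y‖ ≤ C * ∫ y, ‖g y‖ := by
  rw [← integral_const_mul]
  refine norm_integral_le_of_norm_le (hg.norm.const_mul C) (ae_of_all _ fun y => ?_)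
  rw [norm_mul]
  exact mul_le_mul_of_nonneg_right (hfC _) (norm_nonneg _)

lemma hasDerivAt_integral_comp_sub_mul (hf : ∀ x, HasDerivAt f (f' x) x)
    (hfC : ∀ x, ‖f x‖ ≤ C) (hf' : Continuous f') (hf'C : ∀ x, ‖f' x‖ ≤ C') (hg : Integrable g)
    (x₀ : ℝ) :
    HasDerivAt (fun x => ∫ y, f (x - y) * g y) (∫ y, f' (x₀ - y) * g y) x₀ := by
  have hfc : Continuous f := continuous_iff_continuousAt.2 fun x => (hf x).continuousAt
  refine (hasDerivAt_integral_of_dominated_loc_of_deriv_le (bound := fun y => C' * ‖g y‖)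
    (F' := fun x y => f' (x - y) * g y) Filter.univ_mem
    (.of_forall fun x => (integrable_comp_sub_mul hfc hfC hg x).aestronglyMeasurable)
    (integrable_comp_sub_mul hfc hfC hg x₀)
    (integrable_comp_sub_mul hf' hf'C hg x₀).aestronglyMeasurable
    (ae_of_all _ fun y x _ => ?_) (hg.norm.const_mul C') (ae_of_all _ fun y x _ => ?_)).2
  · rw [norm_mul]
    exact mul_le_mul_of_nonneg_right (hf'C _) (norm_nonneg _)
  · simpa using ((hf (x - y)).comp x ((hasDerivAt_id x).sub_const y)).mul_const (g y)

end Convolution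

lemma integral_mul_deriv_eq_neg_of_bounded {w w' f f' : ℝ → ℝ} {C C' : ℝ}
    (hw : ∀ x, HasDerivAt w (w' x) x) (hwC : ∀ x, ‖w x‖ ≤ C) (hw'C : ∀ x, ‖w' x‖ ≤ C')
    (hf : ∀ x, HasDerivAt f (f' x) x) (hfi : Integrable f) (hf'i : Integrable f') :
    ∫ x, w x * f' x = -∫ x, w' x * f x := by
  have hwc : Continuous w := continuous_iff_continuousAt.2 fun x => (hw x).continuousAt
  have hw'm : AEStronglyMeasurable w' := by
    rw [show w' = deriv w from funext fun x => (hw x).deriv.symm]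
    exact (measurable_deriv w).aestronglyMeasurable
  exact integral_mul_deriv_eq_deriv_mul_of_integrable (fun x _ => hw x) (fun x _ => hf x)
    (hf'i.bdd_mul hwc.aestronglyMeasurable (ae_of_all _ hwC))
    (hfi.bdd_mul hw'm (ae_of_all _ hw'C))
    (hfi.bdd_mul hwc.aestronglyMeasurable (ae_of_all _ hwC))

namespace SchwartzMap

lemma coe_derivCLM (u : 𝓢(ℝ, ℝ)) : ⇑(derivCLM ℝ ℝ u) = deriv u :=
  funext (derivCLM_apply ℝ u)

lemma hasDerivAt_sq (u : 𝓢(ℝ, ℝ)) (x : ℝ) :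
    HasDerivAt (fun x => u x ^ 2) (2 * (u x * deriv u x)) x := by
  simpa [mul_assoc] using (u.hasDerivAt x).fun_pow 2

lemma integrable_mul_deriv (u : 𝓢(ℝ, ℝ)) : Integrable fun x => u x * deriv u x := by
  have := (u.memLp 2).integrable_mul ((derivCLM ℝ ℝ u).memLp 2)
  rwa [coe_derivCLM] at this

lemma two_mul_integral_mul_sub_deriv_deriv_mul_deriv (u : 𝓢(ℝ, ℝ)) {w : ℝ → ℝ} {C C' : ℝ}
    (hw : Differentiable ℝ w) (hwC : ∀ x, ‖w x‖ ≤ C) (hw'C : ∀ x, ‖deriv w x‖ ≤ C') :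
    2 * ∫ x, w x * (u x - deriv (deriv u) x) * deriv u x
      = -(∫ x, deriv w x * u x ^ 2) + ∫ x, deriv w x * deriv u x ^ 2 := by
  set u' := derivCLM ℝ ℝ u
  have hu' : deriv u = u' := (coe_derivCLM u).symm
  rw [hu']
  have hw' : ∀ x, HasDerivAt w (deriv w x) x := fun x => (hw x).hasDerivAt
  have hwc : AEStronglyMeasurable w := hw.continuous.aestronglyMeasurable
  have hderiv_sq_int (v : 𝓢(ℝ, ℝ)) : Integrable fun x => 2 * (v x * deriv v x) :=
    v.integrable_mul_deriv.const_mul 2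
  have hibp (v : 𝓢(ℝ, ℝ)) :
      ∫ x, w x * (2 * (v x * deriv v x)) = -∫ x, deriv w x * v x ^ 2 :=
    integral_mul_deriv_eq_neg_of_bounded hw' hwC hw'C v.hasDerivAt_sq
      ((v.memLp 2).integrable_sq) (hderiv_sq_int v)
  calc 2 * ∫ x, w x * (u x - deriv u' x) * u' x
      = ∫ x, (w x * (2 * (u x * deriv u x)) - w x * (2 * (u' x * deriv u' x))) := by
        rw [← integral_const_mul, hu']; congr 1; ext x; ring
    _ = _ := by
      rw [integral_sub ((hderiv_sq_int u).bdd_mul hwc (ae_of_all _ hwC))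
        ((hderiv_sq_int u').bdd_mul hwc (ae_of_all _ hwC)), hibp, hibp]
      ring

end SchwartzMap

/-- Integration-by-parts identity: for a Schwartz function `u`, with
`m = u - u''` and `w = p₂ * u` (where `p₂(x) = (1/4)·exp(−2|x|)`, so that
`4w - w'' = u`), one has `2 ∫ w m u' = −∫ w' u² + ∫ w' (u')²`. -/
theorem stmt_5 (u : SchwartzMap ℝ ℝ)
    (p₂ : ℝ → ℝ) (hp : ∀ x, p₂ x = (1 / 4) * Real.exp (-2 * |x|))
    (w : ℝ → ℝ) (hw : ∀ x, w x = ∫ y, p₂ (x - y) * u y)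
    (m : ℝ → ℝ) (hm : ∀ x, m x = u x - deriv (deriv (u : ℝ → ℝ)) x) :
    2 * ∫ x, w x * m x * deriv (u : ℝ → ℝ) x
      = -(∫ x, deriv w x * (u x) ^ 2) + ∫ x, deriv w x * (deriv (u : ℝ → ℝ) x) ^ 2 := by
  have hp₂ : Integrable p₂ := by
    simpa only [← funext hp] using (integrable_exp_neg_mul_abs two_pos).const_mul (1 / 4)
  have hw_conv : w = fun x => ∫ y, u (x - y) * p₂ y := funext fun x => by
    rw [hw x, ← integral_sub_left_eq_self _ volume x]
    simp only [sub_sub_cancel, mul_comm]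
  have hu'C : ∀ x, ‖deriv u x‖ ≤ SchwartzMap.seminorm ℝ 0 0 (SchwartzMap.derivCLM ℝ ℝ u) :=
    fun x => by simpa using SchwartzMap.norm_le_seminorm ℝ (SchwartzMap.derivCLM ℝ ℝ u) x
  have hw' : ∀ x, HasDerivAt w (∫ y, deriv u (x - y) * p₂ y) x := by
    rw [hw_conv]
    exact hasDerivAt_integral_comp_sub_mul u.hasDerivAt (SchwartzMap.norm_le_seminorm ℝ u)
      (SchwartzMap.derivCLM ℝ ℝ u).continuous hu'C hp₂
  have hwC (x : ℝ) : ‖w x‖ ≤ SchwartzMap.seminorm ℝ 0 0 u * ∫ y, ‖p₂ y‖ := by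
    rw [hw_conv]
    exact norm_integral_comp_sub_mul_le (SchwartzMap.norm_le_seminorm ℝ u) hp₂ x
  have hw'C (x : ℝ) : ‖deriv w x‖ ≤
      SchwartzMap.seminorm ℝ 0 0 (SchwartzMap.derivCLM ℝ ℝ u) * ∫ y, ‖p₂ y‖ := by
    rw [(hw' x).deriv]
    exact norm_integral_comp_sub_mul_le hu'C hp₂ x
  simp only [hm]
  exact u.two_mul_integral_mul_sub_deriv_deriv_mul_deriv (fun x => (hw' x).differentiableAt)
    hwC hw'C
end

section
/- Let T > 0, let u : [0,T) × ℝ → ℝ be twice continuously differentiable, and let ρ : [0,T) × ℝ → ℝ be twice continuously differentiable and satisfy ∂ₜρ + u ∂ₓρ + 2 (∂ₓu) ρ = 0 on [0,T) × ℝ. Let q : [0,T) × ℝ → ℝ be continuously differentiable with ∂ₜq(t,x) = u(t, q(t,x)) and q(0,x) = x. Suppose x₀ ∈ ℝ is such that ∂ₓ²u(t, q(t,x₀)) = 0 for almost every t ∈ [0,T). Then for all t ∈ [0,T), ∂ₓρ(t, q(t,x₀)) = ∂ₓρ(0, x₀) · exp( −3 ∫₀ᵗ ∂ₓu(s, q(s,x₀))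 ds ). -/
/-!
Differentiating the transport equation in `x` and exchanging `∂ₓ∂ₜρ = ∂ₜ∂ₓρ`, the slope
`w = ∂ₓρ` satisfies `∂ₜw + u ∂ₓw = -3 (∂ₓu) w - 2 (∂ₓ²u) ρ`. Along the characteristic
`s ↦ q(s, x₀)` the left side is `d/ds w(s, q(s, x₀))`, and the last term vanishes there because
`∂ₓ²u` is continuous and vanishes almost everywhere on it. So `w` solves a scalar linear ODE,
and the integrating factor `exp (3 ∫ ∂ₓu)` makes it constant.
-/

open MeasureTheory Real Function Set

section PartialDerivatives

variable {E : Type*} [NormedAddCommGroup E] [NormedSpace ℝ E] {f : ℝ → ℝ → E} {t x : ℝ}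

lemma hasDerivAt_snd_of_differentiableAt_uncurry (hf : DifferentiableAt ℝ (uncurry f) (t, x)) :
    HasDerivAt (f t) (fderiv ℝ (uncurry f) (t, x) (0, 1)) x :=
  hf.hasFDerivAt.comp_hasDerivAt x ((hasDerivAt_const x t).prodMk (hasDerivAt_id x))

lemma hasDerivAt_fst_of_differentiableAt_uncurry (hf : DifferentiableAt ℝ (uncurry f) (t, x)) :
    HasDerivAt (fun s => f s x) (fderiv ℝ (uncurry f) (t, x) (1, 0)) t :=
  hf.hasFDerivAt.comp_hasDerivAt (l := uncurry f) t
    ((hasDerivAt_id' t).prodMk (hasDerivAt_const t x))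

lemma hasDerivAt_comp_graph {γ : ℝ → ℝ} {v : ℝ}
    (hf : DifferentiableAt ℝ (uncurry f) (t, γ t)) (hγ : HasDerivAt γ v t) :
    HasDerivAt (fun s => f s (γ s))
      (deriv (fun s => f s (γ t)) t + v • deriv (f t) (γ t)) t := by
  have hv : ((1 : ℝ), v) = (1, 0) + v • (0, 1) := by ext <;> simp
  have h := hf.hasFDerivAt.comp_hasDerivAt t ((hasDerivAt_id t).prodMk hγ)
  rwa [hv, map_add, map_smul, ← (hasDerivAt_fst_of_differentiableAt_uncurry hf).deriv,
    ← (hasDerivAt_snd_of_differentiableAt_uncurry hf).deriv] at h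

variable {n : WithTop ℕ∞}

lemma contDiff_uncurry_deriv_snd (hf : ContDiff ℝ (n + 1) (uncurry f)) :
    ContDiff ℝ n (uncurry fun t x => deriv (f t) x) := by
  have h : (uncurry fun t x => deriv (f t) x) = fun p => fderiv ℝ (uncurry f) p (0, 1) := by
    ext ⟨t, x⟩
    exact (hasDerivAt_snd_of_differentiableAt_uncurry (hf.differentiable (by simp) _)).deriv
  rw [h]
  exact (hf.fderiv_right le_rfl).clm_apply contDiff_const

lemma contDiff_uncurry_deriv_fst (hf : ContDiff ℝ (n + 1) (uncurry f)) :
    ContDiff ℝ n (uncurry fun t x => deriv (fun s => f s x) t) := by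
  have h : (uncurry fun t x => deriv (fun s => f s x) t)
      = fun p => fderiv ℝ (uncurry f) p (1, 0) := by
    ext ⟨t, x⟩
    exact (hasDerivAt_fst_of_differentiableAt_uncurry (hf.differentiable (by simp) _)).deriv
  rw [h]
  exact (hf.fderiv_right le_rfl).clm_apply contDiff_const

end PartialDerivatives

lemma deriv_snd_deriv_fst_comm {f : ℝ → ℝ → ℝ} (hf : ContDiff ℝ 2 (uncurry f)) (t x : ℝ) :
    deriv (fun y => deriv (fun s => f s y) t) x = deriv (fun s => deriv (f s) x) t := by
  set F := uncurry f
  have hF : Differentiable ℝ F := hf.differentiable (by norm_num)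
  have hF' : DifferentiableAt ℝ (fderiv ℝ F) (t, x) :=
    (hf.fderiv_right (m := 1) le_rfl).differentiable one_ne_zero _
  have hfst : (fun y => deriv (fun s => f s y) t) = fun y => fderiv ℝ F (t, y) (1, 0) :=
    funext fun y => (hasDerivAt_fst_of_differentiableAt_uncurry (hF _)).deriv
  have hsnd : (fun s => deriv (f s) x) = fun s => fderiv ℝ F (s, x) (0, 1) :=
    funext fun s => (hasDerivAt_snd_of_differentiableAt_uncurry (hF _)).deriv
  rw [hfst, hsnd,
    ((hasDerivAt_snd_of_differentiableAt_uncurry (f := fun t y => fderiv ℝ F (t, y)) hF').clm_apply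
      (hasDerivAt_const x ((1 : ℝ), (0 : ℝ)))).deriv,
    ((hasDerivAt_fst_of_differentiableAt_uncurry (f := fun t y => fderiv ℝ F (t, y)) hF').clm_apply
      (hasDerivAt_const t ((0 : ℝ), (1 : ℝ)))).deriv]
  simp only [map_zero, add_zero]
  exact hf.contDiffAt.isSymmSndFDerivAt (by simp) (0, 1) (1, 0)

section Transport

variable {u ρ : ℝ → ℝ → ℝ} {t : ℝ}

lemma deriv_slope_of_transport (hu : ContDiff ℝ 2 (uncurry u)) (hρ : ContDiff ℝ 2 (uncurry ρ))
    (htransport : ∀ x, deriv (fun s => ρ s x) t + u t x * deriv (ρ t) x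
      + 2 * deriv (u t) x * ρ t x = 0) (x : ℝ) :
    deriv (fun s => deriv (ρ s) x) t + u t x * deriv (deriv (ρ t)) x
      = -3 * deriv (u t) x * deriv (ρ t) x - 2 * deriv (deriv (u t)) x * ρ t x := by
  have hdiff {f : ℝ → ℝ → ℝ} (hf : ContDiff ℝ 1 (uncurry f)) : DifferentiableAt ℝ (f t) x :=
    (hasDerivAt_snd_of_differentiableAt_uncurry (hf.differentiable one_ne_zero _)).differentiableAt
  have h := ((hdiff (contDiff_uncurry_deriv_fst (n := 1) hρ)).hasDerivAt.add
    ((hdiff (hu.of_le one_le_two)).hasDerivAt.mul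
      (hdiff (contDiff_uncurry_deriv_snd (n := 1) hρ)).hasDerivAt)).add
    (((hdiff (contDiff_uncurry_deriv_snd (n := 1) hu)).hasDerivAt.const_mul 2).mul
      (hdiff (hρ.of_le one_le_two)).hasDerivAt)
  have h0 := h.unique <| (hasDerivAt_const x (0 : ℝ)).congr_of_eventuallyEq
    (Filter.Eventually.of_forall htransport)
  rw [deriv_snd_deriv_fst_comm hρ] at h0
  linarith

lemma hasDerivAt_slope_along_characteristic {γ : ℝ → ℝ}
    (hu : ContDiff ℝ 2 (uncurry u)) (hρ : ContDiff ℝ 2 (uncurry ρ))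
    (htransport : ∀ x, deriv (fun s => ρ s x) t + u t x * deriv (ρ t) x
      + 2 * deriv (u t) x * ρ t x = 0)
    (hγ : HasDerivAt γ (u t (γ t)) t) :
    HasDerivAt (fun s => deriv (ρ s) (γ s))
      (-3 * deriv (u t) (γ t) * deriv (ρ t) (γ t)
        - 2 * deriv (deriv (u t)) (γ t) * ρ t (γ t)) t := by
  have h := hasDerivAt_comp_graph
    ((contDiff_uncurry_deriv_snd (n := 1) hρ).differentiable one_ne_zero _) hγ
  rwa [smul_eq_mul, deriv_slope_of_transport hu hρ htransport] at h

end Transport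

lemma eq_mul_exp_integral_of_hasDerivAt {F a : ℝ → ℝ} {t₀ T : ℝ} (ha : Continuous a)
    (hF : ∀ s ∈ Ico t₀ T, HasDerivAt F (a s * F s) s) :
    ∀ t ∈ Ico t₀ T, F t = F t₀ * exp (∫ s in t₀..t, a s) := by
  intro t ht
  set A := fun r => ∫ s in t₀..r, a s
  have hA (s : ℝ) : HasDerivAt A (a s) s := (ha.integral_hasStrictDerivAt t₀ s).hasDerivAt
  set G := fun r => F r * exp (-A r)
  have hG : ∀ s ∈ Ico t₀ t, HasDerivAt G 0 s := fun s hs =>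
    ((hF s ⟨hs.1, hs.2.trans ht.2⟩).mul (hA s).neg.exp).congr_deriv (by ring)
  have hGcont : ContinuousOn G (Icc t₀ t) := fun s hs =>
    ((hF s ⟨hs.1, hs.2.trans_lt ht.2⟩).continuousAt.mul
      (hA s).continuousAt.neg.rexp).continuousWithinAt
  have hGt := constant_of_has_deriv_right_zero hGcont (fun s hs => (hG s hs).hasDerivWithinAt)
    t ⟨ht.1, le_rfl⟩
  simp only [G, A, intervalIntegral.integral_same, neg_zero, exp_zero, mul_one] at hGt
  rw [← hGt, mul_assoc, ← exp_add, neg_add_cancel, exp_zero, mul_one]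

theorem stmt_14_general (T : ℝ)
    (u ρ q : ℝ → ℝ → ℝ)
    (hu : ContDiff ℝ 2 (Function.uncurry u))
    (hρ : ContDiff ℝ 2 (Function.uncurry ρ))
    (htransport : ∀ t ∈ Set.Ico (0 : ℝ) T, ∀ x : ℝ,
      deriv (fun s => ρ s x) t + u t x * deriv (ρ t) x
        + 2 * deriv (u t) x * ρ t x = 0)
    (hq : ContDiff ℝ 1 (Function.uncurry q))
    (hode : ∀ t ∈ Set.Ico (0 : ℝ) T, ∀ x : ℝ,
      deriv (fun s => q s x) t = u t (q t x))
    (hq0 : ∀ x : ℝ, q 0 x = x)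
    (x₀ : ℝ)
    (hx₀ : ∀ᵐ t ∂ (volume.restrict (Set.Ico (0 : ℝ) T)),
      deriv (deriv (u t)) (q t x₀) = 0) :
    ∀ t ∈ Set.Ico (0 : ℝ) T,
      deriv (ρ t) (q t x₀)
        = deriv (ρ 0) x₀ * Real.exp (-3 * ∫ s in (0 : ℝ)..t, deriv (u s) (q s x₀)) := by
  have hγ : ContDiff ℝ 1 fun s => q s x₀ := hq.comp (contDiff_id.prodMk contDiff_const)
  have hgraph : Continuous fun s => (s, q s x₀) := continuous_id.prodMk hγ.continuous
  have hux : Continuous fun s => deriv (u s) (q s x₀) :=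
    (contDiff_uncurry_deriv_snd (n := 1) hu).continuous.comp hgraph
  have huxx : Continuous fun s => deriv (deriv (u s)) (q s x₀) :=
    (contDiff_uncurry_deriv_snd (n := 0) (contDiff_uncurry_deriv_snd (n := 1) hu)).continuous.comp
      hgraph
  have huxx_zero : EqOn (fun s => deriv (deriv (u s)) (q s x₀)) 0 (Ico 0 T) :=
    Measure.eqOn_Ico_of_ae_eq volume hx₀ huxx.continuousOn continuousOn_const
  have hslope : ∀ t ∈ Ico 0 T, HasDerivAt (fun s => deriv (ρ s) (q s x₀))
      (-3 * deriv (u t) (q t x₀) * deriv (ρ t) (q t x₀)) t := fun t ht => by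
    have hqt := (hγ.differentiable one_ne_zero t).hasDerivAt
    rw [hode t ht x₀] at hqt
    simpa [huxx_zero ht] using
      hasDerivAt_slope_along_characteristic hu hρ (htransport t ht) hqt
  intro t ht
  rw [eq_mul_exp_integral_of_hasDerivAt (hux.const_mul (-3)) hslope t ht,
    intervalIntegral.integral_const_mul, hq0]

/-- Exponential formula for the slope `∂ₓρ` along a trajectory on which `∂ₓ²u`
vanishes: if `ρ` solves `∂ₜρ + u ∂ₓρ + 2 (∂ₓu) ρ = 0`, `q` is the flow of `u`,
and `∂ₓ²u(t, q(t,x₀)) = 0` for a.e. `t ∈ [0,T)`, then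
`∂ₓρ(t, q(t,x₀)) = ∂ₓρ(0,x₀) · exp(−3 ∫₀ᵗ ∂ₓu(s, q(s,x₀)) ds)`. -/
theorem stmt_14 (T : ℝ) (hT : 0 < T)
    (u ρ q : ℝ → ℝ → ℝ)
    (hu : ContDiff ℝ 2 (Function.uncurry u))
    (hρ : ContDiff ℝ 2 (Function.uncurry ρ))
    (htransport : ∀ t ∈ Set.Ico (0 : ℝ) T, ∀ x : ℝ,
      deriv (fun s => ρ s x) t + u t x * deriv (ρ t) x
        + 2 * deriv (u t) x * ρ t x = 0)
    (hq : ContDiff ℝ 1 (Function.uncurry q))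
    (hode : ∀ t ∈ Set.Ico (0 : ℝ) T, ∀ x : ℝ,
      deriv (fun s => q s x) t = u t (q t x))
    (hq0 : ∀ x : ℝ, q 0 x = x)
    (x₀ : ℝ)
    (hx₀ : ∀ᵐ t ∂ (volume.restrict (Set.Ico (0 : ℝ) T)),
      deriv (deriv (u t)) (q t x₀) = 0) :
    ∀ t ∈ Set.Ico (0 : ℝ) T,
      deriv (ρ t) (q t x₀)
        = deriv (ρ 0) x₀ * Real.exp (-3 * ∫ s in (0 : ℝ)..t, deriv (u s) (q s x₀)) :=
  stmt_14_general T u ρ q hu hρ htransport hq hode hq0 x₀ hx₀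
end
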